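/- arXiv:math/0605119 — 2 statements merged into one kernel-verified Lean document; each statement's English description precedes it below -/
import Mathlib

section
/- Let I = (u_1,…,u_m) be a monomial ideal in S = K[x_1,…,x_n] and u a monomial of S; let I^p and u^p be their polarizations in T, and let π : T → S be the specialization map. Then I : u is a prime ideal of S if and only if I^p : u^p is a prime ideal of T, and in this case I : u = π(I^p : u^p). -/
/-!
Write `u = x^a` and `U` for the (upward closed) exponent set of `I`. Both colon ideals are
monomial ideals, with exponent sets `{c | a + c ∈ U}` and
`{d | polarExp a + d ≥ polarExp c for some c ∈ U}`, and a monomial ideal is prime exactly when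
each of its monomials is divisible by one of its variables. When `u ∉ I`, the variables of
`I^p : u^p` are the `x_{i,a_i}` with `x_i ∈ I : u`, and a monomial of `I^p : u^p` lying above
`(x^c)^p`, `c ∈ U`, contains `x_{i,a_i}` for every `i` with `a_i < c_i`. This transports the
criterion in both directions, and `π` maps the variables of `I^p : u^p` onto those of `I : u`.
-/

open MvPolynomial

/-- The monomial `x^a` in `K[x_i : i ∈ σ]`. -/
noncomputable def mono (K : Type*) [Field K] {σ : Type*} (a : σ →₀ ℕ) :
    MvPolynomial σ K :=
  MvPolynomial.monomial a 1

/-- An ideal is a monomial ideal if it is generated by monomials. -/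
def IsMonomialIdeal {K : Type*} [Field K] {σ : Type*}
    (I : Ideal (MvPolynomial σ K)) : Prop :=
  ∃ A : Set (σ →₀ ℕ), I = Ideal.span ((fun a => mono K a) '' A)

/-- The exponent vector of the polarization `u^p = ∏ᵢ ∏_{j<aᵢ} x_{ij}` of the
monomial `u = ∏ᵢ xᵢ^{aᵢ}`: the squarefree exponent supported on
`{(i,j) : j < a i}`, in the variables of `T = K[x_{ij}]`. -/
noncomputable def polarExp {n : ℕ} (a : Fin n →₀ ℕ) : (Fin n × ℕ) →₀ ℕ :=
  Finsupp.indicator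
    (a.support.biUnion fun i => (Finset.range (a i)).image fun j => (i, j))
    (fun _ _ => 1)

/-- The polarization `I^p ⊂ T = K[x_{ij}]` of a monomial ideal `I ⊂ S`: the
ideal generated by the polarizations of the monomials of `I` (for a monomial
ideal this is the ideal generated by the polarizations of any set of monomial
generators). -/
noncomputable def polarIdeal {K : Type*} [Field K] {n : ℕ}
    (I : Ideal (MvPolynomial (Fin n) K)) : Ideal (MvPolynomial (Fin n × ℕ) K) :=
  Ideal.span ((fun a => mono K (polarExp a)) '' {a : Fin n →₀ ℕ | mono K a ∈ I})

section MonomialIdeal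

variable {K : Type*} [Field K] {σ : Type*}

lemma mono_add (a b : σ →₀ ℕ) : mono K (a + b) = mono K a * mono K b := by
  simp [mono, monomial_mul]

lemma mono_eq_prod_X_pow (c : σ →₀ ℕ) : mono K c = ∏ i ∈ c.support, X i ^ c i :=
  monic_monomial_eq c

lemma mem_span_mono_iff {B : Set (σ →₀ ℕ)} (hB : IsUpperSet B) {p : MvPolynomial σ K} :
    p ∈ Ideal.span (mono K '' B) ↔ ∀ c ∈ p.support, c ∈ B := by
  refine mem_ideal_span_monomial_image.trans ?_
  exact forall₂_congr fun c _ => ⟨fun ⟨b, hb, hbc⟩ => hB hbc hb, fun hc => ⟨c, hc, le_rfl⟩⟩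

lemma mono_mem_span_mono_iff {A : Set (σ →₀ ℕ)} {c : σ →₀ ℕ} :
    mono K c ∈ Ideal.span (mono K '' A) ↔ c ∈ upperClosure A := by
  classical
  refine mem_ideal_span_monomial_image.trans ?_
  simp [mono, support_monomial, mem_upperClosure]

lemma span_mono_upperClosure (A : Set (σ →₀ ℕ)) :
    Ideal.span (mono K '' upperClosure A) = Ideal.span (mono K '' A) := by
  refine le_antisymm ?_ (Ideal.span_mono (Set.image_mono subset_upperClosure))
  rw [Ideal.span_le]
  rintro _ ⟨c, hc, rfl⟩
  exact mono_mem_span_mono_iff.mpr hc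

lemma support_mul_mono (p : MvPolynomial σ K) (a : σ →₀ ℕ) :
    (p * mono K a).support = p.support.map (addRightEmbedding a) :=
  AddMonoidAlgebra.support_coeff_mul_single p 1 (by simp) a

lemma colon_span_mono {B : Set (σ →₀ ℕ)} (hB : IsUpperSet B) (a : σ →₀ ℕ) :
    (Ideal.span (mono K '' B)).colon (Ideal.span {mono K a}) =
      Ideal.span (mono K '' ((a + ·) ⁻¹' B)) := by
  ext p
  rw [Ideal.mem_colon_span_singleton, mem_span_mono_iff hB,
    mem_span_mono_iff (hB.preimage add_right_mono), support_mul_mono]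
  simp [add_comm]

/-- For an upper set `B`, this says that the monomial ideal spanned by `B` is generated by
variables. -/
def GeneratedByVariables (B : Set (σ →₀ ℕ)) : Prop :=
  ∀ c ∈ B, ∃ i ∈ c.support, Finsupp.single i 1 ∈ B

lemma GeneratedByVariables.zero_notMem {B : Set (σ →₀ ℕ)} (hB : GeneratedByVariables B) :
    (0 : σ →₀ ℕ) ∉ B := fun h0 => by
  simpa using hB 0 h0

lemma span_mono_eq_span_X {B : Set (σ →₀ ℕ)} (hB : GeneratedByVariables B) :
    Ideal.span (mono K '' B) = Ideal.span (X '' {i | Finsupp.single i 1 ∈ B}) := by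
  refine le_antisymm ?_ (Ideal.span_le.mpr ?_)
  · rw [Ideal.span_le]
    rintro _ ⟨c, hc, rfl⟩
    obtain ⟨i, hi, hiB⟩ := hB c hc
    have hle : Finsupp.single i 1 ≤ c :=
      Finsupp.single_le_iff.mpr (Nat.one_le_iff_ne_zero.mpr (Finsupp.mem_support_iff.mp hi))
    rw [SetLike.mem_coe, ← tsub_add_cancel_of_le hle, mono_add]
    exact Ideal.mul_mem_left _ _ (Ideal.subset_span ⟨i, hiB, rfl⟩)
  · rintro _ ⟨i, hi, rfl⟩
    exact Ideal.subset_span ⟨Finsupp.single i 1, hi, rfl⟩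

lemma span_X_eq_ker_aeval (V : Set σ) [DecidablePred (· ∈ V)] :
    Ideal.span (X '' V : Set (MvPolynomial σ K)) =
      RingHom.ker (aeval fun i => if i ∈ V then 0 else X i :
        MvPolynomial σ K →ₐ[K] MvPolynomial σ K) := by
  set f : σ → MvPolynomial σ K := fun i => if i ∈ V then 0 else X i
  set J := Ideal.span (X '' V : Set (MvPolynomial σ K))
  refine le_antisymm (Ideal.span_le.mpr ?_) fun p hp => ?_
  · rintro _ ⟨i, hi, rfl⟩
    simp [f, hi]
  · have hsub : ∀ q : MvPolynomial σ K, q - aeval f q ∈ J := by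
      intro q
      induction q using MvPolynomial.induction_on with
      | C r => simp
      | add q₁ q₂ h₁ h₂ => simpa [add_sub_add_comm] using J.add_mem h₁ h₂
      | mul_X q i hq =>
        by_cases hi : i ∈ V
        · have hXi : X i ∈ J := Ideal.subset_span ⟨i, hi, rfl⟩
          simpa [f, hi] using J.mul_mem_left q hXi
        · simpa [f, hi, sub_mul] using J.mul_mem_right (X i) hq
    have hp0 : aeval f p = 0 := hp
    simpa only [hp0, sub_zero] using hsub p

lemma isPrime_span_X (V : Set σ) : (Ideal.span (X '' V : Set (MvPolynomial σ K))).IsPrime := by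
  classical
  rw [span_X_eq_ker_aeval]
  exact RingHom.ker_isPrime _

theorem isPrime_span_mono_iff {B : Set (σ →₀ ℕ)} (hB : IsUpperSet B) :
    (Ideal.span (mono K '' B)).IsPrime ↔ GeneratedByVariables B := by
  refine ⟨fun hP c hc => ?_, fun h => ?_⟩
  · have hmem : mono K c ∈ Ideal.span (mono K '' B) := Ideal.subset_span ⟨c, hc, rfl⟩
    rw [mono_eq_prod_X_pow, hP.prod_mem_iff] at hmem
    obtain ⟨i, hi, hXi⟩ := hmem
    have hX : mono K (Finsupp.single i 1) ∈ Ideal.span (mono K '' B) :=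
      hP.mem_of_pow_mem _ hXi
    rw [mono_mem_span_mono_iff, ← SetLike.mem_coe, hB.upperClosure] at hX
    exact ⟨i, hi, hX⟩
  · rw [span_mono_eq_span_X h]
    exact isPrime_span_X _

lemma map_rename_span_X {τ : Type*} (f : σ → τ) (V : Set σ) :
    Ideal.map (rename f : MvPolynomial σ K →ₐ[K] MvPolynomial τ K) (Ideal.span (X '' V)) =
      Ideal.span (X '' (f '' V)) := by
  simp [Ideal.map_span, Set.image_image]

end MonomialIdeal

section Polarization

variable {n : ℕ}

lemma polarExp_apply (a : Fin n →₀ ℕ) (i : Fin n) (j : ℕ) :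
    polarExp a (i, j) = if j < a i then 1 else 0 := by
  classical
  simp only [polarExp, Finsupp.indicator_apply, Finset.mem_biUnion, Finset.mem_image,
    Finset.mem_range, Finsupp.mem_support_iff, Prod.mk.injEq]
  exact if_congr ⟨fun ⟨_, _, _, hj, rfl, rfl⟩ => hj, fun hj => ⟨i, by omega, j, hj, rfl, rfl⟩⟩
    rfl rfl

lemma polarExp_le_add_iff (c a : Fin n →₀ ℕ) (d : (Fin n × ℕ) →₀ ℕ) :
    polarExp c ≤ polarExp a + d ↔ ∀ i j, j < c i → j < a i ∨ d (i, j) ≠ 0 := by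
  simp only [Finsupp.le_def, Prod.forall, Finsupp.add_apply, polarExp_apply]
  exact forall₂_congr fun i j => by split_ifs <;> omega

lemma polarExp_le_polarExp_iff (c a : Fin n →₀ ℕ) : polarExp c ≤ polarExp a ↔ c ≤ a := by
  have h := polarExp_le_add_iff c a 0
  simp only [add_zero, Finsupp.coe_zero, Pi.zero_apply, ne_eq, not_true_eq_false,
    or_false] at h
  rw [h, Finsupp.le_def]
  exact forall_congr' fun i =>
    ⟨fun h => not_lt.mp fun hai => (h _ hai).false, fun h _ hj => hj.trans_le h⟩

lemma polarExp_le_polarExp_add_single_iff (c a : Fin n →₀ ℕ) (i : Fin n) (j : ℕ) :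
    polarExp c ≤ polarExp a + Finsupp.single (i, j) 1 ↔
      c ≤ a ∨ (j = a i ∧ c ≤ a + Finsupp.single i 1) := by
  classical
  rw [polarExp_le_add_iff]
  simp only [Finsupp.single_apply, Prod.mk.injEq, ne_eq, ite_eq_right_iff,
    one_ne_zero, imp_false, not_not, Finsupp.le_def, Finsupp.add_apply]
  constructor
  · intro h
    by_cases hc : ∀ i', c i' ≤ a i'
    · exact Or.inl hc
    push Not at hc
    obtain ⟨i₀, hi₀⟩ := hc
    obtain ⟨rfl, rfl⟩ := (h i₀ (a i₀) hi₀).resolve_left (lt_irrefl _)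
    refine Or.inr ⟨rfl, fun i' => ?_⟩
    by_contra! hlt
    by_cases hi' : i = i'
    · subst hi'
      have := h i (a i + 1) (by simpa using hlt)
      omega
    · have := h i' (a i') (by simp only [hi', if_false] at hlt; omega)
      omega
  · rintro (hc | ⟨rfl, hc⟩) i' j' hj'
    · exact Or.inl (hj'.trans_le (hc i'))
    · have := hc i'
      split_ifs at this with hi'
      · subst hi'
        omega
      · omega

end Polarization

section PolarColon

variable {K : Type*} [Field K] {n : ℕ} {U : Set (Fin n →₀ ℕ)}

lemma polarIdeal_span_mono (A : Set (Fin n →₀ ℕ)) :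
    polarIdeal (Ideal.span (mono K '' A)) =
      Ideal.span (mono K '' (polarExp '' upperClosure A)) := by
  rw [polarIdeal, Set.image_image]
  congr 2
  ext c
  exact mono_mem_span_mono_iff

lemma polarExp_mem_upperClosure_iff (hU : IsUpperSet U) (c : Fin n →₀ ℕ) :
    polarExp c ∈ upperClosure (polarExp '' U) ↔ c ∈ U := by
  simp only [mem_upperClosure, Set.exists_mem_image, polarExp_le_polarExp_iff]
  exact ⟨fun ⟨b, hb, hbc⟩ => hU hbc hb, fun hc => ⟨c, hc, le_rfl⟩⟩

lemma polarExp_add_single_mem_upperClosure_iff (hU : IsUpperSet U) {a : Fin n →₀ ℕ} (ha : a ∉ U)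
    (i : Fin n) (j : ℕ) :
    polarExp a + Finsupp.single (i, j) 1 ∈ upperClosure (polarExp '' U) ↔
      j = a i ∧ a + Finsupp.single i 1 ∈ U := by
  simp only [mem_upperClosure, Set.exists_mem_image, polarExp_le_polarExp_add_single_iff]
  constructor
  · rintro ⟨c, hc, hca | ⟨hj, hc'⟩⟩
    · exact absurd (hU hca hc) ha
    · exact ⟨hj, hU hc' hc⟩
  · rintro ⟨hj, h⟩
    exact ⟨_, h, Or.inr ⟨hj, le_rfl⟩⟩

theorem generatedByVariables_colon_iff_polar (hU : IsUpperSet U) (a : Fin n →₀ ℕ) :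
    GeneratedByVariables ((a + ·) ⁻¹' U) ↔
      GeneratedByVariables ((polarExp a + ·) ⁻¹' ↑(upperClosure (polarExp '' U))) := by
  constructor
  · intro h
    have ha : a ∉ U := fun ha => h.zero_notMem (by simpa using ha)
    rintro d hd
    obtain ⟨_, ⟨c, hc, rfl⟩, hcd⟩ := mem_upperClosure.mp hd
    obtain ⟨i, hi, hai⟩ := h (c - a) (hU le_add_tsub hc)
    have hlt : a i < c i := by
      rw [Finsupp.mem_support_iff, Finsupp.tsub_apply] at hi
      omega
    have hdi : d (i, a i) ≠ 0 :=
      ((polarExp_le_add_iff c a d).mp hcd i (a i) hlt).resolve_left (lt_irrefl _)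
    exact ⟨(i, a i), Finsupp.mem_support_iff.mpr hdi,
      (polarExp_add_single_mem_upperClosure_iff hU ha i (a i)).mpr ⟨rfl, hai⟩⟩
  · intro h
    have ha : a ∉ U := fun ha =>
      h.zero_notMem (by simpa [polarExp_mem_upperClosure_iff hU] using ha)
    intro c hc
    obtain ⟨⟨i, j⟩, hij, hmem⟩ := h (polarExp (a + c))
      ((upperClosure _).upper le_add_self ((polarExp_mem_upperClosure_iff hU _).mpr hc))
    obtain ⟨rfl, hai⟩ := (polarExp_add_single_mem_upperClosure_iff hU ha i j).mp hmem
    have hci : c i ≠ 0 := by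
      rw [Finsupp.mem_support_iff, polarExp_apply, Finsupp.add_apply] at hij
      split_ifs at hij <;> omega
    exact ⟨i, Finsupp.mem_support_iff.mpr hci, hai⟩

lemma image_fst_polar_colon_variables (hU : IsUpperSet U) {a : Fin n →₀ ℕ} (ha : a ∉ U) :
    Prod.fst '' {ij | Finsupp.single ij 1 ∈ (polarExp a + ·) ⁻¹' ↑(upperClosure (polarExp '' U))} =
      {i | Finsupp.single i 1 ∈ (a + ·) ⁻¹' U} := by
  ext i
  constructor
  · rintro ⟨⟨i', j⟩, hmem, rfl⟩
    exact ((polarExp_add_single_mem_upperClosure_iff hU ha i' j).mp hmem).2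
  · intro h
    exact ⟨(i, a i), (polarExp_add_single_mem_upperClosure_iff hU ha i (a i)).mpr ⟨rfl, h⟩, rfl⟩

end PolarColon

/-- `I : u` is a prime ideal of `S` if and only if
`I^p : u^p` is a prime ideal of `T`; in this case `I : u = π(I^p : u^p)`,
where `π : T → S`, `x_{ij} ↦ x_i`, is the specialization map. -/
theorem colon_prime_iff_polarization_colon_prime
    {K : Type*} [Field K] {n : ℕ} (I : Ideal (MvPolynomial (Fin n) K))
    (hI : IsMonomialIdeal I) (a : Fin n →₀ ℕ) :
    ((I.colon (Ideal.span {mono K a})).IsPrime ↔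
      ((polarIdeal I).colon (Ideal.span {mono K (polarExp a)})).IsPrime) ∧
    ((I.colon (Ideal.span {mono K a})).IsPrime →
      I.colon (Ideal.span {mono K a}) =
        Ideal.map (rename (Prod.fst : Fin n × ℕ → Fin n) : MvPolynomial (Fin n × ℕ) K →ₐ[K] MvPolynomial (Fin n) K)
          ((polarIdeal I).colon (Ideal.span {mono K (polarExp a)}))) := by
  obtain ⟨A, rfl⟩ := hI
  have hU := (upperClosure A).upper
  have hPU := (upperClosure (polarExp '' (upperClosure A : Set (Fin n →₀ ℕ)))).upper
  rw [polarIdeal_span_mono, ← span_mono_upperClosure (polarExp '' _), ← span_mono_upperClosure A,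
    colon_span_mono hU, colon_span_mono hPU, isPrime_span_mono_iff (hU.preimage add_right_mono),
    isPrime_span_mono_iff (hPU.preimage add_right_mono)]
  refine ⟨generatedByVariables_colon_iff_polar hU a, fun h => ?_⟩
  have ha : a ∉ upperClosure A := fun ha => h.zero_notMem (by simpa using ha)
  rw [span_mono_eq_span_X h, span_mono_eq_span_X ((generatedByVariables_colon_iff_polar hU a).mp h),
    map_rename_span_X, image_fst_polar_colon_variables hU ha]
end

section
/- Let R be a Noetherian ring and M a finitely generated R-module with a prime filtration F: 0 = M_0 ⊂ M_1 ⊂ ⋯ ⊂ M_r = M, where M_i/M_{i−1} ≅ R/P_i for prime ideals P_i. Then for every prime ideal P of R, the length multiplicity satisfies mult_M(P) ≤ |{i ∈ {1,…,r} : P_i = P}|, i.e., mult_M(P) is at most the number of factors of F isomorphic to R/P. -/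
/-!
Localize the filtration at `Q` and intersect it with `Γ = H⁰_{QR_Q}(M_Q)`. The length of `Γ` is
the sum of the lengths of the successive quotients of this chain, and the step coming from
`Mᵢ/Mᵢ₋₁ ≅ R/Pᵢ` contributes nothing if `Pᵢ ⊄ Q` (then `(R/Pᵢ)_Q = 0`), nothing if `Pᵢ ⊊ Q`
(a power of any `q ∈ Q \ Pᵢ` kills a given element of `Γ`, while `q` acts injectively on
`R/Pᵢ`), and at most one if `Pᵢ = Q` (then `(R/Q)_Q` is a field, so any element outside the
smaller term of the step generates the step).
-/

/-- The length multiplicity `mult_M(P) = length_{R_P}(H⁰_{PR_P}(M_P))`: the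
length of the submodule of the localization `M_P` consisting of the elements
annihilated by some power of the maximal ideal of `R_P`. Here the length of a
module is the Krull dimension of its lattice of submodules. -/
noncomputable def lengthMult (R : Type*) [CommRing R] (M : Type*) [AddCommGroup M]
    [Module R M] (P : Ideal R) [P.IsPrime] : WithBot ℕ∞ :=
  Order.krullDim (Submodule (Localization.AtPrime P)
    (↥(⨆ k : ℕ, Submodule.torsionBySet (Localization.AtPrime P)
        (LocalizedModule P.primeCompl M)
        ((IsLocalRing.maximalIdeal (Localization.AtPrime P) ^ k : Ideal _) : Set _))))

section QuotientPrime

variable {R X : Type*} [CommRing R] [AddCommGroup X] [Module R X] {P : Ideal R}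

lemma smul_eq_zero_iff_of_linearEquiv_quotient [P.IsPrime] (e : X ≃ₗ[R] R ⧸ P) {r : R} {x : X} :
    r • x = 0 ↔ r ∈ P ∨ x = 0 := by
  rw [← e.map_eq_zero_iff, map_smul, Algebra.smul_def, mul_eq_zero,
    Ideal.Quotient.algebraMap_eq, Ideal.Quotient.eq_zero_iff_mem, e.map_eq_zero_iff]

lemma exists_smul_eq_smul_of_linearEquiv_quotient (e : X ≃ₗ[R] R ⧸ P) {y : X} (hy : y ≠ 0)
    (x : X) : ∃ r s : R, s ∉ P ∧ s • x = r • y := by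
  obtain ⟨r, hr⟩ := Ideal.Quotient.mk_surjective (e x)
  obtain ⟨s, hs⟩ := Ideal.Quotient.mk_surjective (e y)
  refine ⟨r, s, fun hsP => hy ?_, e.injective ?_⟩
  · rwa [← e.map_eq_zero_iff, ← hs, Ideal.Quotient.eq_zero_iff_mem]
  · rw [map_smul, map_smul, ← hr, ← hs, Algebra.smul_def, Algebra.smul_def,
      Ideal.Quotient.algebraMap_eq, mul_comm]

end QuotientPrime

lemma Submodule.exists_pow_smul_eq_zero_of_mem_iSup_torsionBySet_pow {A N : Type*} [CommRing A]
    [AddCommGroup N] [Module A N] {I : Ideal A} {x : N}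
    (hx : x ∈ ⨆ k : ℕ, torsionBySet A N (I ^ k : Ideal A)) {a : A} (ha : a ∈ I) :
    ∃ n : ℕ, a ^ n • x = 0 := by
  have hdir : Monotone fun k : ℕ => torsionBySet A N (I ^ k : Ideal A) :=
    fun i j hij => torsionBySet_le_torsionBySet_pow i j hij I
  obtain ⟨n, hn⟩ := (mem_iSup_of_directed _ hdir.directed_le).mp hx
  exact ⟨n, (mem_torsionBySet_iff _ _).mp hn ⟨a ^ n, Ideal.pow_mem_pow ha n⟩⟩

section Length

variable {A N : Type*} [Ring A] [AddCommGroup N] [Module A N]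

lemma Submodule.length_eq_length_add_length_quotient {p q : Submodule A N} (h : p ≤ q) :
    Module.length A q = Module.length A p + Module.length A (q ⧸ p.comap q.subtype) := by
  refine Module.length_eq_add_of_exact (inclusion h) (p.comap q.subtype).mkQ
    (inclusion_injective h) (mkQ_surjective _) ?_
  rw [LinearMap.exact_iff, ker_mkQ, range_inclusion]

lemma Submodule.length_eq_sum_length_quotient {k : ℕ} (s : Fin (k + 1) → Submodule A N)
    (hs : ∀ j : Fin k, s j.castSucc ≤ s j.succ) (h0 : s 0 = ⊥) :
    Module.length A (s (Fin.last k)) =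
      ∑ j : Fin k, Module.length A (s j.succ ⧸ (s j.castSucc).comap (s j.succ).subtype) := by
  induction k with
  | zero => rw [Fin.last_zero, h0, Module.length_bot, Finset.univ_eq_empty, Finset.sum_empty]
  | succ k ih =>
    simp only [Fin.sum_univ_castSucc, Fin.succ_castSucc]
    rw [← ih (fun i => s i.castSucc) (fun j => hs j.castSucc) h0, ← Fin.succ_last,
      length_eq_length_add_length_quotient (hs (Fin.last k))]

lemma Submodule.length_quotient_comap_eq_zero {p q : Submodule A N} (h : q ≤ p) :
    Module.length A (q ⧸ p.comap q.subtype) = 0 := by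
  rw [Module.length_eq_zero_iff, comap_subtype_eq_top.mpr h]
  infer_instance

lemma Submodule.length_quotient_comap_le_one {p q : Submodule A N} (hpq : p ≤ q)
    (h : ∀ y ∈ q, y ∉ p → ∀ x ∈ q, ∃ a : A, x - a • y ∈ p) :
    Module.length A (q ⧸ p.comap q.subtype) ≤ 1 := by
  by_cases hqp : q ≤ p
  · rw [length_quotient_comap_eq_zero hqp]
    exact zero_le_one
  have hcov : p ⋖ q := by
    refine ⟨lt_of_le_not_ge hpq hqp, fun z hpz hzq => ?_⟩
    obtain ⟨y, hyz, hyp⟩ := SetLike.exists_of_lt hpz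
    refine hzq.not_ge fun x hx => ?_
    obtain ⟨a, ha⟩ := h y (hzq.le hyz) hyp x hx
    simpa using z.add_mem (hpz.le ha) (z.smul_mem a hyz)
  have := (covBy_iff_quot_is_simple hpq).mp hcov
  exact Module.length_eq_one_iff.mpr this |>.le

end Length

namespace Submodule

variable {R M : Type*} [CommRing R] [AddCommGroup M] [Module R M]
  {S : Submonoid R} {A : Type*} [CommRing A] [Algebra R A] [IsLocalization S A]
  {N : Type*} [AddCommGroup N] [Module R N] [Module A N] [IsScalarTower R A N]
  {f : M →ₗ[R] N} [IsLocalizedModule S f]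
  {C D : Submodule R M} {P : Ideal R} (e : (D ⧸ C.comap D.subtype) ≃ₗ[R] R ⧸ P)
include e

lemma localized'_le_localized'_of_linearEquiv_quotient {s : R} (hsS : s ∈ S) (hsP : s ∈ P) :
    D.localized' A S f ≤ C.localized' A S f := by
  refine localized'_le_localized'_of_smul_le A S f ⟨s, hsS⟩ ?_
  rintro _ ⟨m, hm, rfl⟩
  have : s • Quotient.mk (p := C.comap D.subtype) ⟨m, hm⟩ = 0 := by
    rw [← e.map_eq_zero_iff, map_smul, Algebra.smul_def, Ideal.Quotient.algebraMap_eq,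
      Ideal.Quotient.eq_zero_iff_mem.mpr hsP, zero_mul]
  rwa [← Quotient.mk_smul, Quotient.mk_eq_zero] at this

lemma mem_localized'_of_smul_eq_zero [P.IsPrime] (hSP : ∀ s ∈ S, s ∉ P) {x : N}
    (hx : x ∈ D.localized' A S f) {r : R} (hr : r ∉ P) (hrx : r • x = 0) :
    x ∈ C.localized' A S f := by
  obtain ⟨m, hm, u, rfl⟩ := hx
  rw [← IsLocalizedModule.mk'_smul, IsLocalizedModule.mk'_eq_zero'] at hrx
  obtain ⟨v, hv⟩ := hrx
  have hvr : ((v : R) * r) • Quotient.mk (p := C.comap D.subtype) ⟨m, hm⟩ = 0 := by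
    rw [← Quotient.mk_smul, Quotient.mk_eq_zero, mem_comap]
    simp [mul_smul, ← Submonoid.smul_def, hv]
  rw [smul_eq_zero_iff_of_linearEquiv_quotient e, Quotient.mk_eq_zero] at hvr
  refine ⟨m, hvr.resolve_left fun h => ?_, u, rfl⟩
  rcases Ideal.IsPrime.mem_or_mem ‹_› h with h | h
  exacts [hSP v v.2 h, hr h]

lemma exists_sub_smul_mem_localized' (hPS : ∀ s ∉ P, s ∈ S) {x y : N}
    (hx : x ∈ D.localized' A S f) (hy : y ∈ D.localized' A S f) (hyC : y ∉ C.localized' A S f) :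
    ∃ a : A, x - a • y ∈ C.localized' A S f := by
  obtain ⟨m₁, hm₁, u₁, rfl⟩ := hx
  obtain ⟨m₂, hm₂, u₂, rfl⟩ := hy
  have hm₂C : Quotient.mk (p := C.comap D.subtype) ⟨m₂, hm₂⟩ ≠ 0 := by
    rw [Ne, Quotient.mk_eq_zero]
    exact fun h => hyC ⟨m₂, h, u₂, rfl⟩
  obtain ⟨r, s, hsP, hrs⟩ := exists_smul_eq_smul_of_linearEquiv_quotient e hm₂C
    (Quotient.mk ⟨m₁, hm₁⟩)
  have hC : s • m₁ - r • m₂ ∈ C := by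
    rwa [← Quotient.mk_smul, ← Quotient.mk_smul, ← sub_eq_zero, ← Quotient.mk_sub,
      Quotient.mk_eq_zero] at hrs
  refine ⟨IsLocalization.mk' A (r * u₂) (⟨s, hPS s hsP⟩ * u₁), (u₁ * u₂) • (s • m₁ - r • m₂),
    C.smul_mem _ hC, u₁ * (⟨s, hPS s hsP⟩ * u₁ * u₂), ?_⟩
  rw [IsLocalizedModule.mk'_smul_mk', IsLocalizedModule.mk'_sub_mk']
  congr 1
  simp only [Submonoid.smul_def, Submonoid.coe_mul]
  module

end Submodule

section AtPrime

variable {R M : Type*} [CommRing R] [AddCommGroup M] [Module R M] (Q : Ideal R) [Q.IsPrime]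

variable (M) in
def torsionAtPrime : Submodule (Localization.AtPrime Q) (LocalizedModule Q.primeCompl M) :=
  ⨆ k : ℕ, Submodule.torsionBySet _ _
    ((IsLocalRing.maximalIdeal (Localization.AtPrime Q) ^ k : Ideal _) : Set _)

lemma lengthMult_eq_length_torsionAtPrime :
    lengthMult R M Q = Module.length (Localization.AtPrime Q) (torsionAtPrime M Q) :=
  (Module.coe_length _ _).symm

lemma exists_pow_smul_eq_zero_of_mem_torsionAtPrime {x : LocalizedModule Q.primeCompl M}
    (hx : x ∈ torsionAtPrime M Q) {q : R} (hq : q ∈ Q) : ∃ n : ℕ, q ^ n • x = 0 := by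
  have hq' := (IsLocalization.AtPrime.to_map_mem_maximal_iff (Localization.AtPrime Q) Q q).mpr hq
  obtain ⟨n, hn⟩ := Submodule.exists_pow_smul_eq_zero_of_mem_iSup_torsionBySet_pow hx hq'
  exact ⟨n, by rwa [← map_pow, algebraMap_smul] at hn⟩

variable {Q} {C D : Submodule R M} {P : Ideal R} [P.IsPrime]
  (e : (D ⧸ C.comap D.subtype) ≃ₗ[R] R ⧸ P)
include e

lemma torsionAtPrime_inf_localized_le_of_ne (hPQ : P ≠ Q) :
    torsionAtPrime M Q ⊓ D.localized Q.primeCompl ≤ C.localized Q.primeCompl := by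
  rintro x ⟨hxQ, hxD⟩
  by_cases hPQ' : P ≤ Q
  · obtain ⟨q, hqQ, hqP⟩ := SetLike.not_le_iff_exists.mp fun h => hPQ (le_antisymm hPQ' h)
    obtain ⟨n, hn⟩ := exists_pow_smul_eq_zero_of_mem_torsionAtPrime Q hxQ hqQ
    exact Submodule.mem_localized'_of_smul_eq_zero e
      (fun s (hs : s ∈ Q.primeCompl) hsP => hs (hPQ' hsP)) hxD
      (fun h => hqP (Ideal.IsPrime.mem_of_pow_mem ‹_› n h)) hn
  · obtain ⟨s, hsP, hsQ⟩ := SetLike.not_le_iff_exists.mp hPQ'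
    exact Submodule.localized'_le_localized'_of_linearEquiv_quotient e hsQ hsP hxD

lemma length_quotient_torsionAtPrime_inf_localized_le (hCD : C ≤ D) :
    Module.length (Localization.AtPrime Q)
      (↥(torsionAtPrime M Q ⊓ D.localized Q.primeCompl) ⧸
        (torsionAtPrime M Q ⊓ C.localized Q.primeCompl).comap
          (torsionAtPrime M Q ⊓ D.localized Q.primeCompl).subtype) ≤
      if P = Q then 1 else 0 := by
  split_ifs with hPQ
  · subst hPQ
    refine Submodule.length_quotient_comap_le_one
      (inf_le_inf_left _ ((Submodule.localized'gi _ _ _).gc.monotone_l hCD))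
      fun y hy hyC x hx => ?_
    obtain ⟨a, ha⟩ := Submodule.exists_sub_smul_mem_localized' e (fun s hs => hs) hx.2 hy.2
      fun h => hyC ⟨hy.1, h⟩
    exact ⟨a, sub_mem hx.1 (Submodule.smul_mem _ a hy.1), ha⟩
  · exact (Submodule.length_quotient_comap_eq_zero
      (le_inf inf_le_left (torsionAtPrime_inf_localized_le_of_ne e hPQ))).le

end AtPrime

theorem lengthMult_le_card_factors_general
    {R : Type*} [CommRing R]
    {M : Type*} [AddCommGroup M] [Module R M]
    {r : ℕ} (c : Fin (r + 1) → Submodule R M)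
    (hbot : c 0 = ⊥) (htop : c (Fin.last r) = ⊤)
    (hmono : ∀ j : Fin r, c j.castSucc ≤ c j.succ)
    (P : Fin r → Ideal R) (hP : ∀ j, (P j).IsPrime)
    (hiso : ∀ j : Fin r,
      Nonempty ((↥(c j.succ) ⧸
        Submodule.comap (c j.succ).subtype (c j.castSucc)) ≃ₗ[R] R ⧸ P j))
    (Q : Ideal R) (hQ : Q.IsPrime) :
    @lengthMult R _ M _ _ Q hQ ≤ ((Nat.card {j : Fin r // P j = Q} : ℕ∞) : WithBot ℕ∞) := by
  let T : Fin (r + 1) → Submodule (Localization.AtPrime Q) (LocalizedModule Q.primeCompl M) :=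
    fun i => torsionAtPrime M Q ⊓ (c i).localized Q.primeCompl
  have hT : ∀ j : Fin r, T j.castSucc ≤ T j.succ := fun j =>
    inf_le_inf_left _ ((Submodule.localized'gi _ _ _).gc.monotone_l (hmono j))
  have hT0 : T 0 = ⊥ := by simp [T, hbot]
  have hTlast : T (Fin.last r) = torsionAtPrime M Q := by simp [T, htop]
  rw [lengthMult_eq_length_torsionAtPrime, ← hTlast,
    Submodule.length_eq_sum_length_quotient T hT hT0, Nat.card_eq_fintype_card,
    Fintype.card_subtype, ← Finset.sum_boole]
  exact_mod_cast Finset.sum_le_sum fun j _ =>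
    have := hP j
    length_quotient_torsionAtPrime_inf_localized_le (hiso j).some (hmono j)

/-- Let `R` be Noetherian, `M` a finitely generated
`R`-module with a prime filtration `0 = M₀ ⊂ M₁ ⊂ ⋯ ⊂ M_r = M`,
`Mᵢ/Mᵢ₋₁ ≅ R/Pᵢ`. Then for every prime `P`, the length multiplicity
`mult_M(P)` is at most the number of indices `i` with `Pᵢ = P`. -/
theorem lengthMult_le_card_factors
    {R : Type*} [CommRing R] [IsNoetherianRing R]
    {M : Type*} [AddCommGroup M] [Module R M] [Module.Finite R M]
    {r : ℕ} (c : Fin (r + 1) → Submodule R M)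
    (hbot : c 0 = ⊥) (htop : c (Fin.last r) = ⊤)
    (hmono : ∀ j : Fin r, c j.castSucc ≤ c j.succ)
    (P : Fin r → Ideal R) (hP : ∀ j, (P j).IsPrime)
    (hiso : ∀ j : Fin r,
      Nonempty ((↥(c j.succ) ⧸
        Submodule.comap (c j.succ).subtype (c j.castSucc)) ≃ₗ[R] R ⧸ P j))
    (Q : Ideal R) (hQ : Q.IsPrime) :
    @lengthMult R _ M _ _ Q hQ ≤ ((Nat.card {j : Fin r // P j = Q} : ℕ∞) : WithBot ℕ∞) :=
  lengthMult_le_card_factors_general c hbot htop hmono P hP hiso Q hQ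
end
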